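/- arXiv:2410.04203 — 5 statements merged into one kernel-verified Lean document; each statement's English description precedes it below -/
import Mathlib

section
/- For real numbers x, y with 0 < y < x < 1, the log-odds difference satisfies log(x/(1-x)) - log(y/(1-y)) ≥ (1/(1-y)) · log(x/y). -/
theorem log_odds_diff_ge (x y : ℝ) (hy : 0 < y) (hyx : y < x) (hx : x < 1) :
    Real.log (x / (1 - x)) - Real.log (y / (1 - y)) ≥ (1 / (1 - y)) * Real.log (x / y) := by
  have hx0 : 0 < x := lt_trans hy hyx
  have h1x : 0 < 1 - x := by linarith
  have h1y : 0 < 1 - y := by linarith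
  have e1 : Real.log (x / (1 - x)) - Real.log (y / (1 - y)) =
      Real.log (x / y) + Real.log ((1 - y) / (1 - x)) := by
    rw [Real.log_div hx0.ne' h1x.ne', Real.log_div hy.ne' h1y.ne',
      Real.log_div hx0.ne' hy.ne', Real.log_div h1y.ne' h1x.ne']
    ring
  have h2 : Real.log (x / y) ≤ (x - y) / y := by
    have h := Real.log_le_sub_one_of_pos (div_pos hx0 hy)
    have hd : x / y - 1 = (x - y) / y := by field_simp
    linarith [hd ▸ h]
  have h3 : (x - y) / (1 - y) ≤ Real.log ((1 - y) / (1 - x)) := by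
    have h := Real.log_le_sub_one_of_pos (div_pos h1x h1y)
    have hd : (1 - x) / (1 - y) - 1 = -((x - y) / (1 - y)) := by field_simp; ring
    rw [Real.log_div h1y.ne' h1x.ne', Real.log_div h1x.ne' h1y.ne'] at *
    linarith [hd ▸ h]
  have h4 : (y / (1 - y)) * Real.log (x / y) ≤ (y / (1 - y)) * ((x - y) / y) :=
    mul_le_mul_of_nonneg_left h2 (le_of_lt (div_pos hy h1y))
  have h5 : (y / (1 - y)) * ((x - y) / y) = (x - y) / (1 - y) := by
    field_simp
  have h6 : (1 / (1 - y)) * Real.log (x / y) =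
      Real.log (x / y) + (y / (1 - y)) * Real.log (x / y) := by
    field_simp; ring
  rw [e1, ge_iff_le, h6]
  linarith [h5 ▸ h4]
end

section
/- For 0 < y < x < 1, since -log σ is monotone decreasing (where σ(t) = 1/(1+e^{-t}) is the sigmoid), we have -log σ(log(x/(1-x)) - log(y/(1-y))) ≤ -log σ((1/(1-y)) · log(x/y)). -/
noncomputable def sigmoid (t : ℝ) : ℝ := 1 / (1 + Real.exp (-t))

lemma sigmoid_pos (t : ℝ) : 0 < sigmoid t := by
  unfold sigmoid
  positivity

lemma sigmoid_mono {a b : ℝ} (h : a ≤ b) : sigmoid a ≤ sigmoid b := by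
  unfold sigmoid
  have h1 : Real.exp (-b) ≤ Real.exp (-a) := Real.exp_le_exp.mpr (by linarith)
  have h2 : 0 < 1 + Real.exp (-b) := by positivity
  apply one_div_le_one_div_of_le h2
  linarith

theorem orpo_loss_upper_bound (x y : ℝ) (hy : 0 < y) (hyx : y < x) (hx : x < 1) :
    -Real.log (sigmoid (Real.log (x / (1 - x)) - Real.log (y / (1 - y)))) ≤
      -Real.log (sigmoid ((1 / (1 - y)) * Real.log (x / y))) := by
  have hx0 : 0 < x := hy.trans hyx
  have h1x : 0 < 1 - x := by linarith
  have h1y : 0 < 1 - y := by linarith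
  have harg : (1 / (1 - y)) * Real.log (x / y) ≤
      Real.log (x / (1 - x)) - Real.log (y / (1 - y)) := by
    rw [Real.log_div hx0.ne' h1x.ne', Real.log_div hy.ne' h1y.ne',
      Real.log_div hx0.ne' hy.ne']
    set L := Real.log x - Real.log y with hL
    have hb1 : Real.log (x / y) ≤ x / y - 1 :=
      Real.log_le_sub_one_of_pos (by positivity)
    have hb2 : Real.log ((1 - x) / (1 - y)) ≤ (1 - x) / (1 - y) - 1 :=
      Real.log_le_sub_one_of_pos (by positivity)
    rw [Real.log_div hx0.ne' hy.ne'] at hb1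
    rw [Real.log_div h1x.ne' h1y.ne'] at hb2
    -- hb1 : L ≤ x/y - 1, hb2 : log(1-x) - log(1-y) ≤ (1-x)/(1-y) - 1
    have key : (y / (1 - y)) * L ≤ (x - y) / (1 - y) := by
      have h := mul_le_mul_of_nonneg_left hb1 (le_of_lt (div_pos hy h1y))
      calc (y / (1 - y)) * L ≤ (y / (1 - y)) * (x / y - 1) := h
        _ = (x - y) / (1 - y) := by field_simp
    have key2 : (x - y) / (1 - y) ≤ Real.log (1 - y) - Real.log (1 - x) := by
      have : (1 - x) / (1 - y) - 1 = -((x - y) / (1 - y)) := by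
        field_simp
        ring
      linarith [hb2.trans_eq this]
    have heq : (1 / (1 - y)) * L = L + (y / (1 - y)) * L := by
      field_simp
      ring
    linarith
  have hmono := sigmoid_mono harg
  have := Real.log_le_log (sigmoid_pos _) hmono
  linarith
end

section
/- Let π_ref, π_γ be full-support distributions on a finite set Y, and suppose π_γ satisfies (π_γ(y_w))^{1/a} / (π_γ(y_l))^{1/b} = exp(γ/β) for fixed positive reals a, b, β and real γ. Define the mixed policy π_{α,γ}(y) ∝ π_ref(y)^α π_γ(y)^{1-α}. Then (β/a)·log(π_θ(y_w)/π_{α,γ}(y_w)) - (β/b)·log(π_θ(y_l)/π_{α,γ}(y_l)) = (β/a)·log π_θ(y_w) - (β/b)·log π_θ(y_l) - α·[(β/a)·log π_ref(y_w) - (β/b)·log π_ref(y_l)] - (1-α)·γ + C, where C = (α + (1-α) - 1)·β·((1/a) - (1/b))·log Z = 0 when the normalizing constants are handled via the ratio form; in particular, up to the normalization constant of π_{α,γ}, the length-normalized DPO argument with mixed reference equals the convex combination of the LN-DPO argument (α) and the SimPO argument with margin γ (1-α). -/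
theorem mixed_reference_ln_dpo_decomposition {Y : Type*} [Fintype Y]
    (πθ πref πγ : Y → ℝ) (hθ : ∀ y, 0 < πθ y) (href : ∀ y, 0 < πref y)
    (hγpos : ∀ y, 0 < πγ y) (href1 : ∑ y, πref y = 1) (hγ1 : ∑ y, πγ y = 1)
    (a b β γ α : ℝ) (ha : 0 < a) (hb : 0 < b) (hβ : 0 < β)
    (y_w y_l : Y)
    (hgood : πγ y_w ^ (1 / a) / πγ y_l ^ (1 / b) = Real.exp (γ / β)) :
    let Z : ℝ := ∑ y, πref y ^ α * πγ y ^ (1 - α)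
    let πmix : Y → ℝ := fun y => πref y ^ α * πγ y ^ (1 - α) / Z
    ∃ C : ℝ, C = β * ((1 / a) - (1 / b)) * Real.log Z ∧
      (β / a) * Real.log (πθ y_w / πmix y_w) - (β / b) * Real.log (πθ y_l / πmix y_l) =
        (β / a) * Real.log (πθ y_w) - (β / b) * Real.log (πθ y_l)
          - α * ((β / a) * Real.log (πref y_w) - (β / b) * Real.log (πref y_l))
          - (1 - α) * γ + C := by
  intro Z πmix
  have hZ : 0 < Z := by
    have : Nonempty Y := by
      by_contra h
      simp [not_nonempty_iff.mp h, Finset.univ_eq_empty] at href1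
    exact Finset.sum_pos (fun y _ => mul_pos (Real.rpow_pos_of_pos (href y) _)
      (Real.rpow_pos_of_pos (hγpos y) _)) Finset.univ_nonempty
  refine ⟨β * ((1 / a) - (1 / b)) * Real.log Z, rfl, ?_⟩
  have hlog : ∀ y, Real.log (πθ y / πmix y) =
      Real.log (πθ y) - α * Real.log (πref y) - (1 - α) * Real.log (πγ y) + Real.log Z := by
    intro y
    have h1 : πmix y = πref y ^ α * πγ y ^ (1 - α) / Z := rfl
    have hr := Real.rpow_pos_of_pos (href y) α
    have hg := Real.rpow_pos_of_pos (hγpos y) (1 - α)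
    rw [h1, Real.log_div (hθ y).ne' (div_pos (mul_pos hr hg) hZ).ne',
      Real.log_div (mul_pos hr hg).ne' hZ.ne',
      Real.log_mul hr.ne' hg.ne',
      Real.log_rpow (href y), Real.log_rpow (hγpos y)]
    ring
  have hγeq : (1 / a) * Real.log (πγ y_w) - (1 / b) * Real.log (πγ y_l) = γ / β := by
    have := congrArg Real.log hgood
    rwa [Real.log_div (Real.rpow_pos_of_pos (hγpos y_w) _).ne' (Real.rpow_pos_of_pos (hγpos y_l) _).ne',
      Real.log_rpow (hγpos y_w), Real.log_rpow (hγpos y_l), Real.log_exp] at this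
  rw [hlog y_w, hlog y_l]
  have hβγ : β * ((1 / a) * Real.log (πγ y_w) - (1 / b) * Real.log (πγ y_l)) = γ := by
    rw [hγeq]; field_simp
  rw [← hβγ]; ring
end

section
/- Combining the closed-form RLHF solution with the Bradley-Terry model: if π*(y) = π_ref(y)exp(r(y)/β)/Z, then p*(y₁ ≻ y₂) = σ(β·log(π*(y₁)/π_ref(y₁)) - β·log(π*(y₂)/π_ref(y₂))). -/
theorem dpo_key_identity {Y : Type*} [Fintype Y]
    (πref : Y → ℝ) (href : ∀ y, 0 < πref y)
    (r : Y → ℝ) (β : ℝ) (hβ : 0 < β) (y₁ y₂ : Y) :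
    let Z : ℝ := ∑ y, πref y * Real.exp (r y / β)
    let πstar : Y → ℝ := fun y => πref y * Real.exp (r y / β) / Z
    sigmoid (r y₁ - r y₂) =
      sigmoid (β * Real.log (πstar y₁ / πref y₁) - β * Real.log (πstar y₂ / πref y₂)) := by
  intro Z πstar
  have hZ : 0 < Z := Finset.sum_pos
    (fun y _ => mul_pos (href y) (Real.exp_pos _)) ⟨y₁, Finset.mem_univ y₁⟩
  have key : ∀ y, β * Real.log (πstar y / πref y) = r y - β * Real.log Z := by
    intro y
    have h1 : πstar y / πref y = Real.exp (r y / β) / Z := by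
      field_simp [πstar, (href y).ne', hZ.ne']
      rw [show πstar y = πref y * Real.exp (r y / β) / Z from rfl, div_mul_cancel₀ _ hZ.ne', div_eq_mul_inv]
    rw [h1, Real.log_div (Real.exp_ne_zero _) hZ.ne', Real.log_exp]
    field_simp
  rw [key, key]
  ring_nf
end

section
/- For 0 < y < x < 1, define Δ = log x - log y > 0 and L̄ = -log σ((1/(1-y))·Δ), L = -log σ(log(x/(1-x)) - log(y/(1-y))). Then 0 ≤ L̄ - L and L̄ - L ≤ C·Δ² for some constant C depending on y bounded away from 0 and 1; in particular, the upper bound L̄ is sharp to second order as Δ → 0 with y fixed. -/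
lemma neg_log_sig (t : ℝ) :
    -Real.log (1 / (1 + Real.exp (-t))) = Real.log (1 + Real.exp (-t)) := by
  rw [one_div, Real.log_inv, neg_neg]

lemma log_sub_log_le {u v : ℝ} (hv : 0 < v) (huv : v ≤ u) :
    Real.log u - Real.log v ≤ (u - v) / v := by
  have hu : 0 < u := lt_of_lt_of_le hv huv
  have h1 : Real.log (u / v) ≤ u / v - 1 := Real.log_le_sub_one_of_pos (div_pos hu hv)
  rw [Real.log_div hu.ne' hv.ne'] at h1
  have h2 : u / v - 1 = (u - v) / v := by field_simp
  linarith [h2 ▸ h1]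

lemma le_log_sub_log {u v : ℝ} (hv : 0 < v) (huv : v ≤ u) :
    (u - v) / u ≤ Real.log u - Real.log v := by
  have hu : 0 < u := lt_of_lt_of_le hv huv
  have h1 : Real.log (v / u) ≤ v / u - 1 := Real.log_le_sub_one_of_pos (div_pos hv hu)
  rw [Real.log_div hv.ne' hu.ne'] at h1
  have h2 : v / u - 1 = -((u - v) / u) := by field_simp; ring
  linarith [h2 ▸ h1]

lemma F_anti {a b : ℝ} (h : a ≤ b) :
    Real.log (1 + Real.exp (-b)) ≤ Real.log (1 + Real.exp (-a)) := by
  have : Real.exp (-b) ≤ Real.exp (-a) := Real.exp_le_exp.2 (by linarith)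
  have hb : (0:ℝ) < 1 + Real.exp (-b) := by positivity
  exact Real.log_le_log hb (by linarith)

lemma F_lip {a b : ℝ} (h : a ≤ b) :
    Real.log (1 + Real.exp (-a)) - Real.log (1 + Real.exp (-b)) ≤ b - a := by
  have key : 1 + Real.exp (-a) ≤ Real.exp (b - a) * (1 + Real.exp (-b)) := by
    have h1 : (1:ℝ) ≤ Real.exp (b - a) := Real.one_le_exp (by linarith)
    have h2 : Real.exp (b - a) * Real.exp (-b) = Real.exp (-a) := by
      rw [← Real.exp_add]; ring_nf
    nlinarith [Real.exp_pos (-b)]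
  have ha : (0:ℝ) < 1 + Real.exp (-a) := by positivity
  have := Real.log_le_log ha key
  rw [Real.log_mul (Real.exp_pos _).ne' (by positivity), Real.log_exp] at this
  linarith

lemma b_eq {x y : ℝ} (hx0 : 0 < x) (hx1 : x < 1) (hy0 : 0 < y) (hy1 : y < 1) :
    Real.log (x / (1 - x)) - Real.log (y / (1 - y)) =
      (Real.log x - Real.log y) + (Real.log (1 - y) - Real.log (1 - x)) := by
  rw [Real.log_div hx0.ne' (by linarith : (1:ℝ) - x ≠ 0),
      Real.log_div hy0.ne' (by linarith : (1:ℝ) - y ≠ 0)]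
  ring

lemma a_le_b {x y : ℝ} (hy0 : 0 < y) (hxy : y < x) (hx1 : x < 1) :
    (1 / (1 - y)) * (Real.log x - Real.log y) ≤
      (Real.log x - Real.log y) + (Real.log (1 - y) - Real.log (1 - x)) := by
  have h1y : (0:ℝ) < 1 - y := by linarith
  have h1 : (Real.log x - Real.log y) * y ≤ x - y := by
    have := log_sub_log_le hy0 hxy.le
    exact (le_div_iff₀ hy0).mp this
  have h2 : x - y ≤ (Real.log (1 - y) - Real.log (1 - x)) * (1 - y) := by
    have := le_log_sub_log (v := 1 - x) (u := 1 - y) (by linarith) (by linarith)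
    have h3 : ((1 - y) - (1 - x)) / (1 - y) = (x - y) / (1 - y) := by ring_nf
    rw [h3] at this
    exact (div_le_iff₀ h1y).mp this
  rw [one_div_mul_eq_div, div_le_iff₀ h1y]
  nlinarith

set_option maxHeartbeats 2000000 in
lemma key2 {x y : ℝ} (hy0 : 0 < y) (hy1 : y < 1) (hxy : y < x) (hx1 : x < 1)
    (hc : x ≤ (1 + y) / 2) :
    (Real.log x - Real.log y) + (Real.log (1 - y) - Real.log (1 - x)) -
      (1 / (1 - y)) * (Real.log x - Real.log y) ≤
    2 / (y * (1 - y) ^ 2) * (Real.log x - Real.log y) ^ 2 := by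
  have hx0 : 0 < x := hy0.trans hxy
  have h1x : (0:ℝ) < 1 - x := by linarith
  have h1y : (0:ℝ) < 1 - y := by linarith
  set Δ := Real.log x - Real.log y with hΔdef
  set L := Real.log (1 - y) - Real.log (1 - x) with hLdef
  have hΔ0 : 0 ≤ Δ := by
    have := Real.log_le_log hy0 hxy.le
    simp only [hΔdef]; linarith
  have hL1 : L * (1 - x) ≤ x - y := by
    have h := log_sub_log_le (v := 1 - x) (u := 1 - y) h1x (by linarith)
    have h3 : ((1 - y) - (1 - x)) / (1 - x) = (x - y) / (1 - x) := by ring_nf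
    rw [h3] at h
    exact (le_div_iff₀ h1x).mp h
  have hΔ1 : x - y ≤ Δ * x := by
    have := le_log_sub_log hy0 hxy.le
    exact (div_le_iff₀ hx0).mp this
  have e : Δ + L - (1 / (1 - y)) * Δ = (L * (1 - y) - Δ * y) / (1 - y) := by
    field_simp; ring
  have e2 : 2 / (y * (1 - y) ^ 2) * Δ ^ 2 = (2 * Δ ^ 2) / (y * (1 - y) ^ 2) := by ring
  rw [e, e2, div_le_div_iff₀ h1y (by positivity)]
  -- goal: (L*(1-y) - Δ*y) * (y*(1-y)^2) ≤ 2*Δ^2 * (1-y)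
  have step1 : (L * (1 - y) - Δ * y) * (x * (1 - x)) ≤ (x - y) ^ 2 := by
    have p1 := mul_le_mul_of_nonneg_right hL1 (show (0:ℝ) ≤ x * (1 - y) by positivity)
    have p2 := mul_le_mul_of_nonneg_right hΔ1 (show (0:ℝ) ≤ y * (1 - x) by positivity)
    linarith [p1, p2]
  have step2 : (x - y) ^ 2 ≤ Δ ^ 2 * x ^ 2 := by
    nlinarith [mul_self_le_mul_self (by linarith : (0:ℝ) ≤ x - y) hΔ1]
  have hxx : y * (1 - y) * x ^ 2 ≤ 2 * (x * (1 - x)) := by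
    nlinarith [mul_pos hx0 h1y, mul_pos hy0 hx0]
  have step3 : y * (1 - y) * (Δ ^ 2 * x ^ 2) ≤ 2 * Δ ^ 2 * (x * (1 - x)) := by
    nlinarith [mul_le_mul_of_nonneg_left hxx (sq_nonneg Δ)]
  have hfin : (L * (1 - y) - Δ * y) * (y * (1 - y)) * (x * (1 - x)) ≤
      2 * Δ ^ 2 * (x * (1 - x)) := by
    nlinarith [mul_le_mul_of_nonneg_left step1 (show (0:ℝ) ≤ y * (1 - y) by positivity),
               mul_le_mul_of_nonneg_left step2 (show (0:ℝ) ≤ y * (1 - y) by positivity),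
               step3]
  have hpos : (0:ℝ) < x * (1 - x) := mul_pos hx0 h1x
  have hmain : (L * (1 - y) - Δ * y) * (y * (1 - y)) ≤ 2 * Δ ^ 2 :=
    le_of_mul_le_mul_right (by nlinarith [hfin]) hpos
  nlinarith [mul_le_mul_of_nonneg_right hmain h1y.le]

theorem orpo_bound_sharp (y : ℝ) (hy0 : 0 < y) (hy1 : y < 1) :
    (∀ x : ℝ, y < x → x < 1 →
      0 ≤ (-Real.log (sigmoid ((1 / (1 - y)) * (Real.log x - Real.log y)))) -
          (-Real.log (sigmoid (Real.log (x / (1 - x)) - Real.log (y / (1 - y)))))) ∧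
    ∃ C : ℝ, ∀ x : ℝ, y < x → x < 1 →
      (-Real.log (sigmoid ((1 / (1 - y)) * (Real.log x - Real.log y)))) -
        (-Real.log (sigmoid (Real.log (x / (1 - x)) - Real.log (y / (1 - y))))) ≤
        C * (Real.log x - Real.log y) ^ 2 := by
  have h1y : (0:ℝ) < 1 - y := by linarith
  constructor
  · intro x hxy hx1
    have hx0 : 0 < x := hy0.trans hxy
    rw [b_eq hx0 hx1 hy0 hy1]
    simp only [sigmoid]
    rw [neg_log_sig, neg_log_sig]
    have := F_anti (a_le_b hy0 hxy hx1)
    linarith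
  · refine ⟨2 / (y * (1 - y) ^ 2) +
      Real.log 2 / (Real.log ((1 + y) / 2) - Real.log y) ^ 2, ?_⟩
    intro x hxy hx1
    have hx0 : 0 < x := hy0.trans hxy
    have h1x : (0:ℝ) < 1 - x := by linarith
    rw [b_eq hx0 hx1 hy0 hy1]
    simp only [sigmoid]
    rw [neg_log_sig, neg_log_sig]
    have hΔ0 : 0 ≤ Real.log x - Real.log y := by
      have := Real.log_le_log hy0 hxy.le; linarith
    have hδ0 : 0 < Real.log ((1 + y) / 2) - Real.log y := by
      have := Real.log_lt_log hy0 (show y < (1 + y) / 2 by linarith); linarith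
    have hC2 : 0 ≤ Real.log 2 / (Real.log ((1 + y) / 2) - Real.log y) ^ 2 :=
      div_nonneg (Real.log_nonneg (by norm_num)) (by positivity)
    rcases le_or_gt x ((1 + y) / 2) with hc | hc
    · -- Lipschitz regime
      have hlip := F_lip (a_le_b hy0 hxy hx1)
      have hk := key2 hy0 hy1 hxy hx1 hc
      nlinarith [mul_nonneg hC2 (sq_nonneg (Real.log x - Real.log y))]
    · -- Δ bounded below regime
      have ha0 : 0 ≤ (1 / (1 - y)) * (Real.log x - Real.log y) :=
        mul_nonneg (by positivity) hΔ0
      have hFa : Real.log (1 + Real.exp (-((1 / (1 - y)) * (Real.log x - Real.log y)))) ≤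
          Real.log 2 := by
        have he : Real.exp (-((1 / (1 - y)) * (Real.log x - Real.log y))) ≤ 1 :=
          Real.exp_le_one_iff.mpr (by linarith)
        have : (0:ℝ) < 1 + Real.exp (-((1 / (1 - y)) * (Real.log x - Real.log y))) := by
          positivity
        exact Real.log_le_log this (by linarith)
      have hFb : 0 ≤ Real.log (1 + Real.exp (-((Real.log x - Real.log y) +
          (Real.log (1 - y) - Real.log (1 - x))))) :=
        Real.log_nonneg (by nlinarith [Real.exp_pos (-((Real.log x - Real.log y) +
          (Real.log (1 - y) - Real.log (1 - x))))])
      have hδ : Real.log ((1 + y) / 2) - Real.log y ≤ Real.log x - Real.log y := by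
        have := Real.log_le_log (show (0:ℝ) < (1 + y) / 2 by positivity) hc.le
        linarith
      have hsq : (Real.log ((1 + y) / 2) - Real.log y) ^ 2 ≤
          (Real.log x - Real.log y) ^ 2 := by nlinarith
      have hlog2 : Real.log 2 ≤
          Real.log 2 / (Real.log ((1 + y) / 2) - Real.log y) ^ 2 *
            (Real.log x - Real.log y) ^ 2 := by
        have h0 : Real.log 2 / (Real.log ((1 + y) / 2) - Real.log y) ^ 2 *
            (Real.log ((1 + y) / 2) - Real.log y) ^ 2 = Real.log 2 := by
          field_simp
        linarith [mul_le_mul_of_nonneg_left hsq hC2]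
      have hC1 : 0 ≤ 2 / (y * (1 - y) ^ 2) * (Real.log x - Real.log y) ^ 2 := by positivity
      linarith
end
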